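/- arXiv:1606.04775 — 2 statements merged into one kernel-verified Lean document; each statement's English description precedes it below -/
import Mathlib

section
/- With the braided tensor product algebra A ⊔ B := A ⊗ B of braided-commutative ℤⁿ-graded algebras (product (a⊗b)(a'⊗b') = R(deg a', deg b) (aa')⊗(bb')), the maps ι₁ : A → A ⊔ B, a ↦ a ⊗ 1_B and ι₂ : B → A ⊔ B, b ↦ 1_A ⊗ b are graded algebra morphisms, and A ⊔ B with (ι₁, ι₂) is the coproduct of A and B in the category of braided-commutative ℤⁿ-graded K-algebras: for any pair of graded algebra morphisms φ : A → C, ψ : B → C into a braided-commutative ℤⁿ-graded algebra C, there is a unique graded algebra morphism χ : A ⊔ B → C with χ ∘ ι₁ = φ and χ ∘ ι₂ = ψ. -/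
/-!
Everything is checked on homogeneous pure tensors, which span `A ⊗ B`. Since `R(·, 0) = R(0, ·) = 1`,
the braided product agrees with the ordinary one against `a ⊗ 1` on the left and `1 ⊗ b` on the
right; in particular `(a ⊗ 1)(1 ⊗ b) = a ⊗ b`, which forces any morphism to be
`a ⊗ b ↦ φ(a) ψ(b)`. This map is multiplicative because braided commutativity of `C` moves
`ψ(b)` past `φ(a')` at the cost of exactly the factor `R(deg a', deg b)` in the product.
-/

open scoped TensorProduct
open TensorProduct

noncomputable section

universe u v w

/-- A bicharacter on `ℤⁿ` with values in `Kˣ`. -/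
def IsBicharacter {n : ℕ} {K : Type*} [Field K]
    (R : (Fin n → ℤ) → (Fin n → ℤ) → Kˣ) : Prop :=
  (∀ m m' p, R (m + m') p = R m p * R m' p) ∧
  (∀ m p p', R m (p + p') = R m p * R m p')

/-- A skew-symmetric bicharacter: `R(m,p) R(p,m) = 1`. -/
def IsSkewBicharacter {n : ℕ} {K : Type*} [Field K]
    (R : (Fin n → ℤ) → (Fin n → ℤ) → Kˣ) : Prop :=
  IsBicharacter R ∧ ∀ m p, R m p * R p m = 1

/-- Braided commutativity of a `ℤⁿ`-graded algebra:
`a·a' = R(deg a', deg a) a'·a` for homogeneous elements. -/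
def BraidedComm {n : ℕ} {K : Type*} [Field K] (R : (Fin n → ℤ) → (Fin n → ℤ) → Kˣ)
    {A : Type*} [Ring A] [Algebra K A] (𝒜 : (Fin n → ℤ) → Submodule K A) : Prop :=
  ∀ p q, ∀ a ∈ 𝒜 p, ∀ b ∈ 𝒜 q, a * b = ((R q p : Kˣ) : K) • (b * a)

/-- A degree-preserving (graded) map. -/
def IsGradedMap {n : ℕ} {K : Type*} [Field K] {A B : Type*}
    [AddCommMonoid A] [Module K A] [AddCommMonoid B] [Module K B]
    (𝒜 : (Fin n → ℤ) → Submodule K A) (ℬ : (Fin n → ℤ) → Submodule K B)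
    (f : A → B) : Prop :=
  ∀ p, ∀ a ∈ 𝒜 p, f a ∈ ℬ p

/-- The grading on a tensor product: `(A ⊗ B)^p = ⨆_q A^q ⊗ B^(p-q)`. -/
def tensorGrade {n : ℕ} {K : Type*} [Field K] {A B : Type*}
    [AddCommGroup A] [Module K A] [AddCommGroup B] [Module K B]
    (𝒜 : (Fin n → ℤ) → Submodule K A) (ℬ : (Fin n → ℤ) → Submodule K B)
    (p : Fin n → ℤ) : Submodule K (A ⊗[K] B) :=
  ⨆ q, LinearMap.range (TensorProduct.map (𝒜 q).subtype (ℬ (p - q)).subtype)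

/-- The grading on `K[x]` with `x` of degree `0`: everything sits in degree zero. -/
def unitGrade {n : ℕ} (K : Type*) [Field K] (p : Fin n → ℤ) : Submodule K (Polynomial K) :=
  if p = 0 then ⊤ else ⊥

/-- The grading on the dual numbers `K[x]/(x²)` with `x` of degree `0`. -/
def dualGrade {n : ℕ} (K : Type*) [Field K] (p : Fin n → ℤ) : Submodule K (DualNumber K) :=
  if p = 0 then ⊤ else ⊥

/-- The grading on `K[x]` with `x` of degree `m`: the degree `p` part is spanned by
those `x^k` with `k • m = p`. -/
def polyGradeGen {n : ℕ} (K : Type*) [Field K] (m : Fin n → ℤ) (p : Fin n → ℤ) :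
    Submodule K (Polynomial K) :=
  Submodule.span K {f : Polynomial K | ∃ k : ℕ, k • m = p ∧ f = Polynomial.X ^ k}

/-- The relation defining the localization `A[s⁻¹] = (A ⊗ K[x])/(s ⊗ x - 1)`. -/
def locRel (K : Type*) [Field K] {A : Type*} [Ring A] [Algebra K A] (s : A) :
    A ⊗[K] Polynomial K → A ⊗[K] Polynomial K → Prop :=
  fun u v => u = s ⊗ₜ Polynomial.X ∧ v = 1

/-- The localization `A[s⁻¹] := (A ⊗ K[x])/(s ⊗ x − 1)`. -/
abbrev Loc (K : Type*) [Field K] (A : Type*) [Ring A] [Algebra K A] (s : A) : Type _ :=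
  RingQuot (locRel K s)

/-- The canonical morphism `ℓ_s : A → A[s⁻¹]`, `a ↦ [a ⊗ 1]`. -/
noncomputable def locHom (K : Type*) [Field K] {A : Type*} [Ring A] [Algebra K A] (s : A) :
    A →ₐ[K] Loc K A s :=
  (RingQuot.mkAlgHom K (locRel K s)).comp Algebra.TensorProduct.includeLeft

/-- The inverse `[1 ⊗ x]` of `ℓ_s(s)` in `A[s⁻¹]`. -/
noncomputable def locInv (K : Type*) [Field K] {A : Type*} [Ring A] [Algebra K A] (s : A) :
    Loc K A s :=
  RingQuot.mkAlgHom K (locRel K s) (1 ⊗ₜ Polynomial.X)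

/-- The induced grading on the localization `A[s⁻¹]`. -/
noncomputable def locGrade {n : ℕ} (K : Type*) [Field K] {A : Type*} [Ring A] [Algebra K A]
    (𝒜 : (Fin n → ℤ) → Submodule K A) (s : A) (p : Fin n → ℤ) : Submodule K (Loc K A s) :=
  (tensorGrade 𝒜 (unitGrade K) p).map (RingQuot.mkAlgHom K (locRel K s)).toLinearMap

/-- A realization `T` of the braided tensor product algebra `A ⊔ B`:
a linear isomorphism `e : A ⊗ B ≃ T` carrying unit `1 ⊗ 1`, the braided product
`e(a⊗b) e(a'⊗b') = R(deg a', deg b) e((aa') ⊗ (bb'))` and the tensor product grading. -/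
structure BraidedTensor {n : ℕ} {K : Type*} [Field K]
    (R : (Fin n → ℤ) → (Fin n → ℤ) → Kˣ)
    {A B T : Type*} [Ring A] [Algebra K A] [Ring B] [Algebra K B] [Ring T] [Algebra K T]
    (𝒜 : (Fin n → ℤ) → Submodule K A) (ℬ : (Fin n → ℤ) → Submodule K B)
    (𝒯 : (Fin n → ℤ) → Submodule K T) where
  e : A ⊗[K] B ≃ₗ[K] T
  one_def : e (1 ⊗ₜ 1) = 1
  mul_def : ∀ p q p' q', ∀ a ∈ 𝒜 p, ∀ b ∈ ℬ q, ∀ a' ∈ 𝒜 p', ∀ b' ∈ ℬ q',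
    e (a ⊗ₜ b) * e (a' ⊗ₜ b') = ((R p' q : Kˣ) : K) • e ((a * a') ⊗ₜ (b * b'))
  grade_def : ∀ p, (tensorGrade 𝒜 ℬ p).map e.toLinearMap = 𝒯 p

/-- The `B ⊔ A`-valued derivations `ᴴDer(A, B ⊔ A)` (here `T` realizes `B ⊔ A` via `e`):
degree-preserving linear maps satisfying the Leibniz rule along `a ↦ 1_B ⊗ a`. -/
def IsHDer {n : ℕ} {K : Type*} [Field K] {A B T : Type*}
    [Ring A] [Algebra K A] [Ring B] [Algebra K B] [Ring T] [Algebra K T]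
    (𝒜 : (Fin n → ℤ) → Submodule K A) (e : B ⊗[K] A ≃ₗ[K] T)
    (𝒯 : (Fin n → ℤ) → Submodule K T) (v : A →ₗ[K] T) : Prop :=
  (∀ p, ∀ a ∈ 𝒜 p, v a ∈ 𝒯 p) ∧
  ∀ a a' : A, v (a * a') = v a * e (1 ⊗ₜ a') + e (1 ⊗ₜ a) * v a'

/-- The composite `(μ_B ⊗ id_A) ∘ (id_B ⊗ v) ∘ w` entering the bracket of `ᴴDer(A, B ⊔ A)`. -/
noncomputable def hderMul {K : Type*} [Field K] {A B T : Type*}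
    [Ring A] [Algebra K A] [Ring B] [Algebra K B] [Ring T] [Algebra K T]
    (e : B ⊗[K] A ≃ₗ[K] T) (v w : A →ₗ[K] T) : A →ₗ[K] T :=
  LinearMap.mul' K T ∘ₗ
    TensorProduct.map (e.toLinearMap ∘ₗ (TensorProduct.mk K B A).flip 1) v ∘ₗ
    e.symm.toLinearMap ∘ₗ w

/-- The bracket `[v,w] = (μ_B ⊗ id_A)∘((id_B ⊗ v)∘w − (id_B ⊗ w)∘v)` on `ᴴDer(A, B ⊔ A)`. -/
noncomputable def hderBracket {K : Type*} [Field K] {A B T : Type*}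
    [Ring A] [Algebra K A] [Ring B] [Algebra K B] [Ring T] [Algebra K T]
    (e : B ⊗[K] A ≃ₗ[K] T) (v w : A →ₗ[K] T) : A →ₗ[K] T :=
  hderMul e v w - hderMul e w v

/-- The `B⁰`-action `(b·v)(a) = (b ⊗ 1_A) v(a)` on `ᴴDer(A, B ⊔ A)`. -/
noncomputable def hderSMul {K : Type*} [Field K] {A B T : Type*}
    [Ring A] [Algebra K A] [Ring B] [Algebra K B] [Ring T] [Algebra K T]
    (e : B ⊗[K] A ≃ₗ[K] T) (b : B) (v : A →ₗ[K] T) : A →ₗ[K] T :=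
  LinearMap.mulLeft K (e (b ⊗ₜ 1)) ∘ₗ v

/-- A braided derivation of homogeneous degree `d`:
`L(a a') = L(a) a' + R(deg a, d) a L(a')`. -/
def IsBraidedDer {n : ℕ} {K : Type*} [Field K] (R : (Fin n → ℤ) → (Fin n → ℤ) → Kˣ)
    {A : Type*} [Ring A] [Algebra K A] (𝒜 : (Fin n → ℤ) → Submodule K A)
    (d : Fin n → ℤ) (L : A →ₗ[K] A) : Prop :=
  (∀ p, ∀ a ∈ 𝒜 p, L a ∈ 𝒜 (p + d)) ∧
  ∀ p, ∀ a ∈ 𝒜 p, ∀ a' : A, L (a * a') = L a * a' + ((R p d : Kˣ) : K) • (a * L a')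


section Homogeneous

variable {ι K A B M : Type*} [DecidableEq ι] [CommSemiring K]
  [AddCommMonoid A] [Module K A] [AddCommMonoid B] [Module K B] [AddCommMonoid M] [Module K M]
  (𝒜 : ι → Submodule K A) (ℬ : ι → Submodule K B)
  [DirectSum.Decomposition 𝒜] [DirectSum.Decomposition ℬ]

theorem TensorProduct.induction_on_homogeneous {motive : A ⊗[K] B → Prop} (x : A ⊗[K] B)
    (zero : motive 0) (tmul : ∀ i j, ∀ a ∈ 𝒜 i, ∀ b ∈ ℬ j, motive (a ⊗ₜ b))
    (add : ∀ x y, motive x → motive y → motive (x + y)) : motive x := by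
  induction x using TensorProduct.induction_on with
  | zero => exact zero
  | add x y hx hy => exact add x y hx hy
  | tmul a b =>
    induction a using DirectSum.Decomposition.inductionOn 𝒜 with
    | zero => simpa using zero
    | add a a' ha ha' => simpa only [add_tmul] using add _ _ ha ha'
    | homogeneous a =>
      induction b using DirectSum.Decomposition.inductionOn ℬ with
      | zero => simpa using zero
      | add b b' hb hb' => simpa only [tmul_add] using add _ _ hb hb'
      | homogeneous b => exact tmul _ _ _ a.2 _ b.2

theorem TensorProduct.ext_homogeneous {f g : A ⊗[K] B →ₗ[K] M}
    (h : ∀ i j, ∀ a ∈ 𝒜 i, ∀ b ∈ ℬ j, f (a ⊗ₜ b) = g (a ⊗ₜ b)) : f = g :=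
  LinearMap.ext fun x => by
    induction x using TensorProduct.induction_on_homogeneous 𝒜 ℬ with
    | zero => simp
    | tmul i j a ha b hb => exact h i j a ha b hb
    | add x y hx hy => simp only [map_add, hx, hy]

theorem TensorProduct.ext_homogeneous₂ {f g : A ⊗[K] B →ₗ[K] A ⊗[K] B →ₗ[K] M}
    (h : ∀ i j i' j', ∀ a ∈ 𝒜 i, ∀ b ∈ ℬ j, ∀ a' ∈ 𝒜 i', ∀ b' ∈ ℬ j',
      f (a ⊗ₜ b) (a' ⊗ₜ b') = g (a ⊗ₜ b) (a' ⊗ₜ b')) : f = g :=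
  ext_homogeneous 𝒜 ℬ fun i j a ha b hb =>
    ext_homogeneous 𝒜 ℬ fun i' j' a' ha' b' hb' => h i j i' j' a ha b hb a' ha' b' hb'

end Homogeneous

section Bicharacter

variable {n : ℕ} {K : Type*} [Field K] {R : (Fin n → ℤ) → (Fin n → ℤ) → Kˣ}

theorem IsBicharacter.apply_zero_left (hR : IsBicharacter R) (m : Fin n → ℤ) : R 0 m = 1 := by
  simpa using hR.1 0 0 m

theorem IsBicharacter.apply_zero_right (hR : IsBicharacter R) (m : Fin n → ℤ) : R m 0 = 1 := by
  simpa using hR.2 m 0 0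

end Bicharacter

section TensorGrade

variable {n : ℕ} {K A B M : Type*} [Field K] [AddCommGroup A] [Module K A]
  [AddCommGroup B] [Module K B] [AddCommGroup M] [Module K M]
  (𝒜 : (Fin n → ℤ) → Submodule K A) (ℬ : (Fin n → ℤ) → Submodule K B)

theorem tmul_mem_tensorGrade {p q : Fin n → ℤ} {a : A} (ha : a ∈ 𝒜 p) {b : B} (hb : b ∈ ℬ q) :
    a ⊗ₜ b ∈ tensorGrade 𝒜 ℬ (p + q) :=
  Submodule.mem_iSup_of_mem p ⟨⟨a, ha⟩ ⊗ₜ ⟨b, by rwa [add_sub_cancel_left]⟩, rfl⟩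

theorem isGradedMap_tensorGrade {ℳ : (Fin n → ℤ) → Submodule K M} {f : A ⊗[K] B →ₗ[K] M}
    (h : ∀ p q, ∀ a ∈ 𝒜 p, ∀ b ∈ ℬ q, f (a ⊗ₜ b) ∈ ℳ (p + q)) :
    IsGradedMap (tensorGrade 𝒜 ℬ) ℳ f := by
  intro p x hx
  suffices tensorGrade 𝒜 ℬ p ≤ (ℳ p).comap f from this hx
  refine iSup_le fun q => ?_
  rw [range_map_eq_span_tmul, Submodule.span_le]
  rintro _ ⟨a, b, rfl⟩
  simpa using h q (p - q) a a.2 b b.2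

end TensorGrade

def IsBraidedTensorMul {n : ℕ} {K : Type*} [Field K] (R : (Fin n → ℤ) → (Fin n → ℤ) → Kˣ)
    {A B : Type*} [Ring A] [Algebra K A] [Ring B] [Algebra K B]
    (𝒜 : (Fin n → ℤ) → Submodule K A) (ℬ : (Fin n → ℤ) → Submodule K B)
    (mul : A ⊗[K] B →ₗ[K] A ⊗[K] B →ₗ[K] A ⊗[K] B) : Prop :=
  ∀ p q p' q', ∀ a ∈ 𝒜 p, ∀ b ∈ ℬ q, ∀ a' ∈ 𝒜 p', ∀ b' ∈ ℬ q',
    mul (a ⊗ₜ b) (a' ⊗ₜ b') = ((R p' q : Kˣ) : K) • ((a * a') ⊗ₜ (b * b'))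

def braidedLift {K A B C : Type*} [CommSemiring K] [Semiring A] [Algebra K A]
    [Semiring B] [Algebra K B] [Semiring C] [Algebra K C] (φ : A →ₐ[K] C) (ψ : B →ₐ[K] C) :
    A ⊗[K] B →ₗ[K] C :=
  LinearMap.mul' K C ∘ₗ map φ.toLinearMap ψ.toLinearMap

@[simp]
theorem braidedLift_tmul {K A B C : Type*} [CommSemiring K] [Semiring A] [Algebra K A]
    [Semiring B] [Algebra K B] [Semiring C] [Algebra K C] (φ : A →ₐ[K] C) (ψ : B →ₐ[K] C)
    (a : A) (b : B) : braidedLift φ ψ (a ⊗ₜ b) = φ a * ψ b := by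
  simp [braidedLift]

namespace IsBraidedTensorMul

variable {n : ℕ} {K : Type*} [Field K] {R : (Fin n → ℤ) → (Fin n → ℤ) → Kˣ}
  {A B C : Type*} [Ring A] [Algebra K A] [Ring B] [Algebra K B] [Ring C] [Algebra K C]
  {𝒜 : (Fin n → ℤ) → Submodule K A} {ℬ : (Fin n → ℤ) → Submodule K B}
  {𝒞 : (Fin n → ℤ) → Submodule K C} [GradedAlgebra 𝒜] [GradedAlgebra ℬ]
  {mul : A ⊗[K] B →ₗ[K] A ⊗[K] B →ₗ[K] A ⊗[K] B}

theorem tmul_one_mul (hmul : IsBraidedTensorMul R 𝒜 ℬ mul) (hR : IsBicharacter R)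
    (a : A) (x : A ⊗[K] B) : mul (a ⊗ₜ 1) x = (a ⊗ₜ 1) * x := by
  induction a using DirectSum.Decomposition.inductionOn 𝒜 generalizing x with
  | zero => simp
  | add a a' ha ha' => simp only [add_tmul, map_add, LinearMap.add_apply, add_mul, ha, ha']
  | homogeneous a =>
    suffices mul (a ⊗ₜ 1) = LinearMap.mulLeft K ((a : A) ⊗ₜ (1 : B)) from congr($this x)
    refine ext_homogeneous 𝒜 ℬ fun p' q' a' ha' b' hb' => ?_
    simp [hmul _ 0 p' q' a a.2 1 SetLike.GradedOne.one_mem a' ha' b' hb', hR.apply_zero_right]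

theorem mul_one_tmul (hmul : IsBraidedTensorMul R 𝒜 ℬ mul) (hR : IsBicharacter R)
    (x : A ⊗[K] B) (b : B) : mul x (1 ⊗ₜ b) = x * (1 ⊗ₜ b) := by
  induction b using DirectSum.Decomposition.inductionOn ℬ generalizing x with
  | zero => simp
  | add b b' hb hb' => simp only [tmul_add, map_add, mul_add, hb, hb']
  | homogeneous b =>
    suffices mul.flip (1 ⊗ₜ b) = LinearMap.mulRight K ((1 : A) ⊗ₜ (b : B)) from congr($this x)
    refine ext_homogeneous 𝒜 ℬ fun p q a ha b' hb' => ?_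
    simp [hmul p q 0 _ a ha b' hb' 1 SetLike.GradedOne.one_mem b b.2, hR.apply_zero_left]

theorem braidedLift_mul (hmul : IsBraidedTensorMul R 𝒜 ℬ mul) (hC : BraidedComm R 𝒞)
    {φ : A →ₐ[K] C} {ψ : B →ₐ[K] C} (hφ : IsGradedMap 𝒜 𝒞 φ) (hψ : IsGradedMap ℬ 𝒞 ψ)
    (x y : A ⊗[K] B) : braidedLift φ ψ (mul x y) = braidedLift φ ψ x * braidedLift φ ψ y := by
  suffices mul.compr₂ (braidedLift φ ψ) =
      (LinearMap.mul K C).compl₁₂ (braidedLift φ ψ) (braidedLift φ ψ) from congr($this x y)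
  refine ext_homogeneous₂ 𝒜 ℬ fun p q p' q' a ha b hb a' ha' b' hb' => ?_
  have hswap : ψ b * φ a' = ((R p' q : Kˣ) : K) • (φ a' * ψ b) :=
    hC q p' _ (hψ q b hb) _ (hφ p' a' ha')
  simp only [LinearMap.compr₂_apply, LinearMap.compl₁₂_apply, LinearMap.mul_apply',
    hmul p q p' q' a ha b hb a' ha' b' hb', map_smul, braidedLift_tmul, map_mul]
  rw [show φ a * ψ b * (φ a' * ψ b') = φ a * (ψ b * φ a') * ψ b' by simp only [mul_assoc],
    hswap]
  simp only [mul_assoc, smul_mul_assoc, mul_smul_comm]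

theorem eq_braidedLift (hmul : IsBraidedTensorMul R 𝒜 ℬ mul) (hR : IsBicharacter R)
    {φ : A →ₐ[K] C} {ψ : B →ₐ[K] C} {χ : A ⊗[K] B →ₗ[K] C}
    (hχ : ∀ x y, χ (mul x y) = χ x * χ y)
    (hχφ : ∀ a, χ (a ⊗ₜ 1) = φ a) (hχψ : ∀ b, χ (1 ⊗ₜ b) = ψ b) : χ = braidedLift φ ψ :=
  TensorProduct.ext' fun a b => by
    rw [braidedLift_tmul, ← hχφ, ← hχψ, ← hχ, hmul.tmul_one_mul hR, Algebra.TensorProduct.tmul_mul_tmul,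
      mul_one, one_mul]

end IsBraidedTensorMul

theorem isGradedMap_braidedLift {n : ℕ} {K A B C : Type*} [Field K] [Ring A] [Algebra K A]
    [Ring B] [Algebra K B] [Ring C] [Algebra K C]
    {𝒜 : (Fin n → ℤ) → Submodule K A} {ℬ : (Fin n → ℤ) → Submodule K B}
    {𝒞 : (Fin n → ℤ) → Submodule K C} [SetLike.GradedMonoid 𝒞]
    {φ : A →ₐ[K] C} {ψ : B →ₐ[K] C} (hφ : IsGradedMap 𝒜 𝒞 φ) (hψ : IsGradedMap ℬ 𝒞 ψ) :
    IsGradedMap (tensorGrade 𝒜 ℬ) 𝒞 (braidedLift φ ψ) :=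
  isGradedMap_tensorGrade 𝒜 ℬ fun p q a ha b hb => by
    simpa using SetLike.mul_mem_graded (hφ p a ha) (hψ q b hb)

theorem stmt4_general {n : ℕ} {K : Type u} [Field K]
    (R : (Fin n → ℤ) → (Fin n → ℤ) → Kˣ) (hR : IsSkewBicharacter R)
    {A B : Type u} [Ring A] [Algebra K A] [Ring B] [Algebra K B]
    (𝒜 : (Fin n → ℤ) → Submodule K A) (ℬ : (Fin n → ℤ) → Submodule K B)
    [GradedAlgebra 𝒜] [GradedAlgebra ℬ]
    (mul : A ⊗[K] B →ₗ[K] A ⊗[K] B →ₗ[K] A ⊗[K] B)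
    (hmul : ∀ p q p' q', ∀ a ∈ 𝒜 p, ∀ b ∈ ℬ q, ∀ a' ∈ 𝒜 p', ∀ b' ∈ ℬ q',
      mul (a ⊗ₜ b) (a' ⊗ₜ b') = ((R p' q : Kˣ) : K) • ((a * a') ⊗ₜ (b * b')))
    (C : Type u) [Ring C] [Algebra K C]
    (𝒞 : (Fin n → ℤ) → Submodule K C) [GradedAlgebra 𝒞] (hC : BraidedComm R 𝒞)
    (φ : A →ₐ[K] C) (ψ : B →ₐ[K] C)
    (hφ : IsGradedMap 𝒜 𝒞 φ) (hψ : IsGradedMap ℬ 𝒞 ψ) :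
    (∀ a a' : A, mul (a ⊗ₜ 1) (a' ⊗ₜ 1) = (a * a') ⊗ₜ 1) ∧
    (∀ b b' : B, mul (1 ⊗ₜ b) (1 ⊗ₜ b') = 1 ⊗ₜ (b * b')) ∧
    (∀ p, ∀ a ∈ 𝒜 p, (a ⊗ₜ (1 : B)) ∈ tensorGrade 𝒜 ℬ p) ∧
    (∀ p, ∀ b ∈ ℬ p, ((1 : A) ⊗ₜ b) ∈ tensorGrade 𝒜 ℬ p) ∧
    (∃! χ : A ⊗[K] B →ₗ[K] C,
      χ (1 ⊗ₜ 1) = 1 ∧ (∀ x y, χ (mul x y) = χ x * χ y) ∧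
      IsGradedMap (tensorGrade 𝒜 ℬ) 𝒞 χ ∧
      (∀ a : A, χ (a ⊗ₜ 1) = φ a) ∧ (∀ b : B, χ (1 ⊗ₜ b) = ψ b)) := by
  have hmul : IsBraidedTensorMul R 𝒜 ℬ mul := hmul
  have hR : IsBicharacter R := hR.1
  refine ⟨fun a a' => ?_, fun b b' => ?_, fun p a ha => ?_, fun p b hb => ?_,
    braidedLift φ ψ, ⟨by simp, hmul.braidedLift_mul hC hφ hψ, isGradedMap_braidedLift hφ hψ,
      by simp, by simp⟩, fun χ ⟨_, hχ, _, hχφ, hχψ⟩ => hmul.eq_braidedLift hR hχ hχφ hχψ⟩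
  · rw [hmul.tmul_one_mul hR, Algebra.TensorProduct.tmul_mul_tmul, one_mul]
  · rw [hmul.mul_one_tmul hR, Algebra.TensorProduct.tmul_mul_tmul, one_mul]
  · simpa using tmul_mem_tensorGrade 𝒜 ℬ ha (SetLike.GradedOne.one_mem (A := ℬ))
  · simpa using tmul_mem_tensorGrade 𝒜 ℬ (SetLike.GradedOne.one_mem (A := 𝒜)) hb

/-- the braided tensor product `A ⊔ B` with the canonical inclusions
`ι₁ : a ↦ a ⊗ 1`, `ι₂ : b ↦ 1 ⊗ b` is the coproduct in the category of
braided-commutative `ℤⁿ`-graded algebras. -/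
theorem stmt4 {n : ℕ} {K : Type u} [Field K]
    (R : (Fin n → ℤ) → (Fin n → ℤ) → Kˣ) (hR : IsSkewBicharacter R)
    {A B : Type u} [Ring A] [Algebra K A] [Ring B] [Algebra K B]
    (𝒜 : (Fin n → ℤ) → Submodule K A) (ℬ : (Fin n → ℤ) → Submodule K B)
    [GradedAlgebra 𝒜] [GradedAlgebra ℬ]
    (hA : BraidedComm R 𝒜) (hB : BraidedComm R ℬ)
    (mul : A ⊗[K] B →ₗ[K] A ⊗[K] B →ₗ[K] A ⊗[K] B)
    (hmul : ∀ p q p' q', ∀ a ∈ 𝒜 p, ∀ b ∈ ℬ q, ∀ a' ∈ 𝒜 p', ∀ b' ∈ ℬ q',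
      mul (a ⊗ₜ b) (a' ⊗ₜ b') = ((R p' q : Kˣ) : K) • ((a * a') ⊗ₜ (b * b')))
    (C : Type u) [Ring C] [Algebra K C]
    (𝒞 : (Fin n → ℤ) → Submodule K C) [GradedAlgebra 𝒞] (hC : BraidedComm R 𝒞)
    (φ : A →ₐ[K] C) (ψ : B →ₐ[K] C)
    (hφ : IsGradedMap 𝒜 𝒞 φ) (hψ : IsGradedMap ℬ 𝒞 ψ) :
    (∀ a a' : A, mul (a ⊗ₜ 1) (a' ⊗ₜ 1) = (a * a') ⊗ₜ 1) ∧
    (∀ b b' : B, mul (1 ⊗ₜ b) (1 ⊗ₜ b') = 1 ⊗ₜ (b * b')) ∧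
    (∀ p, ∀ a ∈ 𝒜 p, (a ⊗ₜ (1 : B)) ∈ tensorGrade 𝒜 ℬ p) ∧
    (∀ p, ∀ b ∈ ℬ p, ((1 : A) ⊗ₜ b) ∈ tensorGrade 𝒜 ℬ p) ∧
    (∃! χ : A ⊗[K] B →ₗ[K] C,
      χ (1 ⊗ₜ 1) = 1 ∧ (∀ x y, χ (mul x y) = χ x * χ y) ∧
      IsGradedMap (tensorGrade 𝒜 ℬ) 𝒞 χ ∧
      (∀ a : A, χ (a ⊗ₜ 1) = φ a) ∧ (∀ b : B, χ (1 ⊗ₜ b) = ψ b)) :=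
  stmt4_general R hR 𝒜 ℬ mul hmul C 𝒞 hC φ ψ hφ hψ
end
end

section
/- Let F = F_{m₁,…,m_N} be the free braided-commutative ℤⁿ-graded K-algebra with braided partial derivatives ∂ⱼ (degree −mⱼ). For braided derivations L = Σⱼ Lⱼ ∂ⱼ and L' = Σⱼ L'ⱼ ∂ⱼ with homogeneous coefficients Lⱼ, L'ⱼ ∈ F, define the bracket by [L, L'](a) := L(L'(a)) − R(deg L', deg L) L'(L(a)), where deg L := deg Lⱼ − mⱼ (independent of j for homogeneous L). Then [L, L'] is again of the form Σ_k M_k ∂_k with M_k = Σⱼ (Lⱼ ∂ⱼ(L'_k) − R(deg L', deg L) L'ⱼ ∂ⱼ(L_k)); the bracket satisfies braided antisymmetry [L, L'] = −R(deg L', deg L)[L', L] and the braided Jacobi identity [L, [L', L'']] = [[L, L'], L''] + R(deg L', deg L)[L', [L, L'']]. -/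
open scoped TensorProduct
open TensorProduct

noncomputable section

universe u v w

/-- The braided derivation `Σⱼ Lⱼ ∂ⱼ` with coefficients `Lc`. -/
def derOp {K : Type*} [Field K] {F : Type*} [Ring F] [Algebra K F] {N : ℕ}
    (pd : Fin N → (F →ₗ[K] F)) (Lc : Fin N → F) : F →ₗ[K] F :=
  ∑ j, LinearMap.mulLeft K (Lc j) ∘ₗ pd j

/-- The braided bracket `[P,Q] = P∘Q − c Q∘P` (with `c = R(deg Q, deg P)`). -/
def braidedBrk {K : Type*} [Field K] {F : Type*} [Ring F] [Algebra K F]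
    (c : K) (P Q : F →ₗ[K] F) : F →ₗ[K] F :=
  P ∘ₗ Q - c • (Q ∘ₗ P)


/-! A bracket of braided derivations is again a braided derivation, of degree `d + d'`, and a
braided derivation of `F` is determined by its values on the generators `xᵢ`; so the first claim
only needs both sides to agree on each `xᵢ`, where `∂ⱼ(xᵢ) = δᵢⱼ` makes this a direct computation.
Antisymmetry and the Jacobi identity are formal consequences of `R` being a skew-symmetric
bicharacter, valid for arbitrary linear maps. -/

section Bicharacter

variable {n : ℕ} {K : Type*} [Field K] {R : (Fin n → ℤ) → (Fin n → ℤ) → Kˣ}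

theorem IsBicharacter.val_add_left (hR : IsBicharacter R) (p q r : Fin n → ℤ) :
    ((R (p + q) r : Kˣ) : K) = R p r * R q r := by
  rw [hR.1, Units.val_mul]

theorem IsBicharacter.val_add_right (hR : IsBicharacter R) (p q r : Fin n → ℤ) :
    ((R p (q + r) : Kˣ) : K) = R p q * R p r := by
  rw [hR.2, Units.val_mul]

theorem IsBicharacter.map_zero_left (hR : IsBicharacter R) (p : Fin n → ℤ) : R 0 p = 1 := by
  have h := hR.1 0 0 p
  rw [add_zero] at h
  exact left_eq_mul.mp h

theorem IsSkewBicharacter.val_mul_swap (hR : IsSkewBicharacter R) (p q : Fin n → ℤ) :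
    ((R p q : Kˣ) : K) * R q p = 1 := by
  rw [← Units.val_mul, hR.2, Units.val_one]

end Bicharacter

section BraidedBracket

variable {n : ℕ} {K : Type*} [Field K] {A : Type*} [Ring A] [Algebra K A]

theorem braidedBrk_eq_neg_smul_braidedBrk {c c' : K} (hc : c * c' = 1) (P Q : A →ₗ[K] A) :
    braidedBrk c P Q = -c • braidedBrk c' Q P := by
  rw [braidedBrk, braidedBrk, smul_sub, smul_smul, neg_mul, hc]
  module

theorem braidedBrk_jacobi {R : (Fin n → ℤ) → (Fin n → ℤ) → Kˣ} (hR : IsSkewBicharacter R)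
    (d d' d'' : Fin n → ℤ) (P Q S : A →ₗ[K] A) :
    braidedBrk ((R (d' + d'') d : Kˣ) : K) P (braidedBrk ((R d'' d' : Kˣ) : K) Q S) =
      braidedBrk ((R d'' (d + d') : Kˣ) : K) (braidedBrk ((R d' d : Kˣ) : K) P Q) S +
      ((R d' d : Kˣ) : K) •
        braidedBrk ((R (d + d'') d' : Kˣ) : K) Q (braidedBrk ((R d'' d : Kˣ) : K) P S) := by
  have hinv : ((R d d' : Kˣ) : K) = ((R d' d : Kˣ) : K)⁻¹ :=
    eq_inv_of_mul_eq_one_left (hR.val_mul_swap d d')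
  have hne : ((R d' d : Kˣ) : K) ≠ 0 := Units.ne_zero _
  simp only [braidedBrk, LinearMap.comp_sub, LinearMap.sub_comp, LinearMap.comp_smul,
    LinearMap.smul_comp, smul_sub, smul_smul, LinearMap.comp_assoc, hR.1.val_add_left,
    hR.1.val_add_right, hinv]
  match_scalars <;> field_simp <;> ring

end BraidedBracket

namespace IsBraidedDer

variable {n : ℕ} {K : Type*} [Field K] {R : (Fin n → ℤ) → (Fin n → ℤ) → Kˣ}
  {A : Type*} [Ring A] [Algebra K A] {𝒜 : (Fin n → ℤ) → Submodule K A}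
  {d d' : Fin n → ℤ} {L L' : A →ₗ[K] A}

theorem map_one [SetLike.GradedOne 𝒜] (hR : IsBicharacter R) (hL : IsBraidedDer R 𝒜 d L) :
    L 1 = 0 := by
  have h := hL.2 0 1 (SetLike.one_mem_graded 𝒜) 1
  rw [one_mul, mul_one, one_mul, hR.map_zero_left, Units.val_one, one_smul] at h
  exact left_eq_add.mp h

theorem zero : IsBraidedDer R 𝒜 d 0 :=
  ⟨fun _ _ _ => zero_mem _, fun _ _ _ _ => by simp⟩

theorem add (hL : IsBraidedDer R 𝒜 d L) (hL' : IsBraidedDer R 𝒜 d L') :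
    IsBraidedDer R 𝒜 d (L + L') := by
  refine ⟨fun p a ha => add_mem (hL.1 p a ha) (hL'.1 p a ha), fun p a ha a' => ?_⟩
  simp only [LinearMap.add_apply, hL.2 p a ha, hL'.2 p a ha, add_mul, mul_add, smul_add]
  abel

theorem sum {ι : Type*} (s : Finset ι) {D : ι → A →ₗ[K] A}
    (hD : ∀ i ∈ s, IsBraidedDer R 𝒜 d (D i)) : IsBraidedDer R 𝒜 d (∑ i ∈ s, D i) := by
  classical
  induction s using Finset.induction_on with
  | empty => simpa using zero
  | insert i s hi ih =>
    rw [Finset.sum_insert hi]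
    exact (hD i (s.mem_insert_self i)).add (ih fun j hj => hD j (Finset.mem_insert_of_mem hj))

theorem mulLeft [SetLike.GradedMul 𝒜] (hR : IsBicharacter R) (hA : BraidedComm R 𝒜)
    {q : Fin n → ℤ} {c : A} (hc : c ∈ 𝒜 q) (hL : IsBraidedDer R 𝒜 d L) :
    IsBraidedDer R 𝒜 (q + d) (LinearMap.mulLeft K c ∘ₗ L) := by
  refine ⟨fun p a ha => ?_, fun p a ha a' => ?_⟩
  · have hdeg : q + (p + d) = p + (q + d) := by abel
    exact hdeg ▸ SetLike.mul_mem_graded hc (hL.1 p a ha)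
  · have hswap : c * a = ((R p q : Kˣ) : K) • (a * c) := hA q p c hc a ha
    simp only [LinearMap.comp_apply, LinearMap.mulLeft_apply, hL.2 p a ha, mul_add,
      mul_smul_comm, ← mul_assoc, hswap, smul_mul_assoc, smul_smul, hR.val_add_right, mul_comm]

theorem braidedBrk (hR : IsSkewBicharacter R) (hL : IsBraidedDer R 𝒜 d L)
    (hL' : IsBraidedDer R 𝒜 d' L') :
    IsBraidedDer R 𝒜 (d + d') (braidedBrk ((R d' d : Kˣ) : K) L L') := by
  refine ⟨fun p a ha => ?_, fun p a ha a' => ?_⟩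
  · have hdeg : p + d' + d = p + (d + d') := by abel
    have hdeg' : p + d + d' = p + (d + d') := by abel
    exact sub_mem (hdeg ▸ hL.1 _ _ (hL'.1 p a ha))
      (Submodule.smul_mem _ _ (hdeg' ▸ hL'.1 _ _ (hL.1 p a ha)))
  · have hinv : ((R d d' : Kˣ) : K) = ((R d' d : Kˣ) : K)⁻¹ :=
      eq_inv_of_mul_eq_one_left (hR.val_mul_swap d d')
    have hne : ((R d' d : Kˣ) : K) ≠ 0 := Units.ne_zero _
    simp only [_root_.braidedBrk, LinearMap.sub_apply, LinearMap.smul_apply,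
      LinearMap.comp_apply]
    rw [hL'.2 p a ha a', hL.2 p a ha a', map_add, map_add, map_smul, map_smul,
      hL.2 _ _ (hL'.1 p a ha) a', hL.2 p a ha (L' a'),
      hL'.2 _ _ (hL.1 p a ha) a', hL'.2 p a ha (L a'),
      hR.1.val_add_right, hR.1.val_add_left, hR.1.val_add_left, hinv]
    simp only [sub_mul, smul_mul_assoc, mul_sub, mul_smul_comm, smul_add, smul_sub, smul_smul]
    match_scalars <;> field_simp <;> ring

/-- The monoid generated by the homogeneous `x i` consists of homogeneous elements, on which the
braided Leibniz rule applies. -/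
theorem ext_of_adjoin_eq_top [SetLike.GradedMonoid 𝒜] (hR : IsBicharacter R)
    {ι : Type*} {m : ι → Fin n → ℤ} {x : ι → A} (hx : ∀ i, x i ∈ 𝒜 (m i))
    (hgen : Algebra.adjoin K (Set.range x) = ⊤)
    (hL : IsBraidedDer R 𝒜 d L) (hL' : IsBraidedDer R 𝒜 d L') (h : ∀ i, L (x i) = L' (x i)) :
    L = L' := by
  have hspan : Submodule.span K (Submonoid.closure (Set.range x) : Set A) = ⊤ := by
    rw [← Algebra.adjoin_eq_span, hgen, Algebra.top_toSubmodule]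
  refine LinearMap.ext_on hspan fun a ha => ?_
  suffices L a = L' a ∧ ∃ p, a ∈ 𝒜 p from this.1
  induction ha using Submonoid.closure_induction with
  | mem _ hy =>
    obtain ⟨i, rfl⟩ := hy
    exact ⟨h i, m i, hx i⟩
  | one => exact ⟨by rw [hL.map_one hR, hL'.map_one hR], 0, SetLike.one_mem_graded 𝒜⟩
  | mul y z _ _ ihy ihz =>
    obtain ⟨hy, p, hp⟩ := ihy
    obtain ⟨hz, q, hq⟩ := ihz
    exact ⟨by rw [hL.2 p y hp z, hL'.2 p y hp z, hy, hz], p + q, SetLike.mul_mem_graded hp hq⟩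

end IsBraidedDer

section PartialDerivatives

variable {n : ℕ} {K : Type*} [Field K] {R : (Fin n → ℤ) → (Fin n → ℤ) → Kˣ}
  {A : Type*} [Ring A] [Algebra K A] {𝒜 : (Fin n → ℤ) → Submodule K A}
  {N : ℕ} {m : Fin N → Fin n → ℤ} {x : Fin N → A} {pd : Fin N → A →ₗ[K] A}

theorem derOp_apply (Lc : Fin N → A) (a : A) : derOp pd Lc a = ∑ j, Lc j * pd j a := by
  simp [derOp]

theorem derOp_apply_of_pd_eq_ite (hpdval : ∀ j i, pd j (x i) = if i = j then 1 else 0)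
    (Lc : Fin N → A) (i : Fin N) : derOp pd Lc (x i) = Lc i := by
  simp [derOp_apply, hpdval]

theorem isBraidedDer_derOp [SetLike.GradedMul 𝒜] (hR : IsBicharacter R)
    (hA : BraidedComm R 𝒜) (hpd : ∀ j, IsBraidedDer R 𝒜 (-m j) (pd j)) {d : Fin n → ℤ}
    {Lc : Fin N → A} (hLc : ∀ j, Lc j ∈ 𝒜 (d + m j)) : IsBraidedDer R 𝒜 d (derOp pd Lc) :=
  IsBraidedDer.sum _ fun j _ => by
    simpa only [add_neg_cancel_right] using (hpd j).mulLeft hR hA (hLc j)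

theorem braidedBrk_derOp [SetLike.GradedMonoid 𝒜] (hR : IsSkewBicharacter R)
    (hA : BraidedComm R 𝒜) (hx : ∀ i, x i ∈ 𝒜 (m i))
    (hgen : Algebra.adjoin K (Set.range x) = ⊤) (hpd : ∀ j, IsBraidedDer R 𝒜 (-m j) (pd j))
    (hpdval : ∀ j i, pd j (x i) = if i = j then 1 else 0) {d d' : Fin n → ℤ}
    {Lc L'c : Fin N → A} (hLc : ∀ j, Lc j ∈ 𝒜 (d + m j)) (hL'c : ∀ j, L'c j ∈ 𝒜 (d' + m j)) :
    braidedBrk ((R d' d : Kˣ) : K) (derOp pd Lc) (derOp pd L'c) =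
      derOp pd (fun k => derOp pd Lc (L'c k) - ((R d' d : Kˣ) : K) • derOp pd L'c (Lc k)) := by
  have hL := isBraidedDer_derOp hR.1 hA hpd hLc
  have hL' := isBraidedDer_derOp hR.1 hA hpd hL'c
  have hM : ∀ k, derOp pd Lc (L'c k) - ((R d' d : Kˣ) : K) • derOp pd L'c (Lc k) ∈
      𝒜 (d + d' + m k) := fun k => by
    have hdeg : d' + m k + d = d + d' + m k := by abel
    have hdeg' : d + m k + d' = d + d' + m k := by abel
    exact sub_mem (hdeg ▸ hL.1 _ _ (hL'c k)) (Submodule.smul_mem _ _ (hdeg' ▸ hL'.1 _ _ (hLc k)))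
  refine IsBraidedDer.ext_of_adjoin_eq_top hR.1 hx hgen (hL.braidedBrk hR hL')
    (isBraidedDer_derOp hR.1 hA hpd hM) fun i => ?_
  simp only [braidedBrk, LinearMap.sub_apply, LinearMap.smul_apply, LinearMap.comp_apply,
    derOp_apply_of_pd_eq_ite hpdval]

end PartialDerivatives

theorem stmt15_general {n : ℕ} {K : Type*} [Field K]
    (R : (Fin n → ℤ) → (Fin n → ℤ) → Kˣ) (hR : IsSkewBicharacter R)
    {F : Type*} [Ring F] [Algebra K F]
    (𝒻 : (Fin n → ℤ) → Submodule K F) [GradedAlgebra 𝒻] (hF : BraidedComm R 𝒻)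
    {N : ℕ} (m : Fin N → (Fin n → ℤ)) (x : Fin N → F)
    (hx : ∀ i, x i ∈ 𝒻 (m i))
    (hgen : Algebra.adjoin K (Set.range x) = ⊤)
    (pd : Fin N → (F →ₗ[K] F))
    (hpdval : ∀ j i, pd j (x i) = if i = j then 1 else 0)
    (hpddeg : ∀ j p, ∀ a ∈ 𝒻 p, pd j a ∈ 𝒻 (p - m j))
    (hpdLeib : ∀ j p, ∀ a ∈ 𝒻 p, ∀ a' : F,
      pd j (a * a') = pd j a * a' + ((R p (-(m j)) : Kˣ) : K) • (a * pd j a'))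
    (d d' d'' : Fin n → ℤ) (Lc L'c L''c : Fin N → F)
    (hLc : ∀ j, Lc j ∈ 𝒻 (d + m j)) (hL'c : ∀ j, L'c j ∈ 𝒻 (d' + m j)) :
    -- the bracket is again of the form Σ M_k ∂_k with the stated coefficients
    braidedBrk ((R d' d : Kˣ) : K) (derOp pd Lc) (derOp pd L'c) =
      derOp pd (fun k => ∑ j,
        (Lc j * pd j (L'c k) - ((R d' d : Kˣ) : K) • (L'c j * pd j (Lc k)))) ∧
    -- braided antisymmetry
    braidedBrk ((R d' d : Kˣ) : K) (derOp pd Lc) (derOp pd L'c) =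
      - ((R d' d : Kˣ) : K) •
        braidedBrk ((R d d' : Kˣ) : K) (derOp pd L'c) (derOp pd Lc) ∧
    -- braided Jacobi identity
    braidedBrk ((R (d' + d'') d : Kˣ) : K) (derOp pd Lc)
        (braidedBrk ((R d'' d' : Kˣ) : K) (derOp pd L'c) (derOp pd L''c)) =
      braidedBrk ((R d'' (d + d') : Kˣ) : K)
        (braidedBrk ((R d' d : Kˣ) : K) (derOp pd Lc) (derOp pd L'c)) (derOp pd L''c) +
      ((R d' d : Kˣ) : K) •
        braidedBrk ((R (d + d'') d' : Kˣ) : K) (derOp pd L'c)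
          (braidedBrk ((R d'' d : Kˣ) : K) (derOp pd Lc) (derOp pd L''c)) := by
  have hpd : ∀ j, IsBraidedDer R 𝒻 (-m j) (pd j) := fun j =>
    ⟨fun p a ha => sub_eq_add_neg p (m j) ▸ hpddeg j p a ha, hpdLeib j⟩
  refine ⟨?_, braidedBrk_eq_neg_smul_braidedBrk (hR.val_mul_swap d' d) _ _,
    braidedBrk_jacobi hR d d' d'' _ _ _⟩
  rw [braidedBrk_derOp hR hF hx hgen hpd hpdval hLc hL'c]
  simp only [derOp_apply, Finset.smul_sum, ← Finset.sum_sub_distrib]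

/-- on the free braided-commutative graded algebra, the bracket of braided
derivations `L = Σ Lⱼ ∂ⱼ`, `L' = Σ L'ⱼ ∂ⱼ` is again of this form, with the stated
coefficients, and it satisfies braided antisymmetry and the braided Jacobi identity. -/
theorem stmt15 {n : ℕ} {K : Type*} [Field K]
    (R : (Fin n → ℤ) → (Fin n → ℤ) → Kˣ) (hR : IsSkewBicharacter R)
    {F : Type*} [Ring F] [Algebra K F]
    (𝒻 : (Fin n → ℤ) → Submodule K F) [GradedAlgebra 𝒻] (hF : BraidedComm R 𝒻)
    {N : ℕ} (m : Fin N → (Fin n → ℤ)) (x : Fin N → F)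
    (hx : ∀ i, x i ∈ 𝒻 (m i))
    (hgen : Algebra.adjoin K (Set.range x) = ⊤)
    (pd : Fin N → (F →ₗ[K] F))
    (hpdval : ∀ j i, pd j (x i) = if i = j then 1 else 0)
    (hpddeg : ∀ j p, ∀ a ∈ 𝒻 p, pd j a ∈ 𝒻 (p - m j))
    (hpdLeib : ∀ j p, ∀ a ∈ 𝒻 p, ∀ a' : F,
      pd j (a * a') = pd j a * a' + ((R p (-(m j)) : Kˣ) : K) • (a * pd j a'))
    (d d' d'' : Fin n → ℤ) (Lc L'c L''c : Fin N → F)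
    (hLc : ∀ j, Lc j ∈ 𝒻 (d + m j)) (hL'c : ∀ j, L'c j ∈ 𝒻 (d' + m j))
    (hL''c : ∀ j, L''c j ∈ 𝒻 (d'' + m j)) :
    -- the bracket is again of the form Σ M_k ∂_k with the stated coefficients
    braidedBrk ((R d' d : Kˣ) : K) (derOp pd Lc) (derOp pd L'c) =
      derOp pd (fun k => ∑ j,
        (Lc j * pd j (L'c k) - ((R d' d : Kˣ) : K) • (L'c j * pd j (Lc k)))) ∧
    -- braided antisymmetry
    braidedBrk ((R d' d : Kˣ) : K) (derOp pd Lc) (derOp pd L'c) =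
      - ((R d' d : Kˣ) : K) •
        braidedBrk ((R d d' : Kˣ) : K) (derOp pd L'c) (derOp pd Lc) ∧
    -- braided Jacobi identity
    braidedBrk ((R (d' + d'') d : Kˣ) : K) (derOp pd Lc)
        (braidedBrk ((R d'' d' : Kˣ) : K) (derOp pd L'c) (derOp pd L''c)) =
      braidedBrk ((R d'' (d + d') : Kˣ) : K)
        (braidedBrk ((R d' d : Kˣ) : K) (derOp pd Lc) (derOp pd L'c)) (derOp pd L''c) +
      ((R d' d : Kˣ) : K) •
        braidedBrk ((R (d + d'') d' : Kˣ) : K) (derOp pd L'c)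
          (braidedBrk ((R d'' d : Kˣ) : K) (derOp pd Lc) (derOp pd L''c)) :=
  stmt15_general R hR 𝒻 hF m x hx hgen pd hpdval hpddeg hpdLeib d d' d'' Lc L'c L''c hLc hL'c
end
end
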